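/- arXiv:1805.12472 — 5 statements merged into one kernel-verified Lean document; each statement's English description precedes it below -/
import Mathlib

section
/- Let n ≥ 2 and let J be the almost-surely unique index maximizing X_i over i ∈ {1,…,n}. Then E[Y_J] = ρ · E[X_J]; consequently the max estimator ρ̂_max = Y_J / E[X_J] is an unbiased estimator of ρ. -/
set_option autoImplicit false

open MeasureTheory ProbabilityTheory Filter

/-- The standard normal density `φ(x) = e^{-x²/2} / √(2π)`. -/
noncomputable def stdGaussianPDF (x : ℝ) : ℝ := Real.exp (-x ^ 2 / 2) / Real.sqrt (2 * Real.pi)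

/-!
Since `Y_J = ρ X_J + √(1 - ρ²) Z_J`, everything reduces to `E[Z_J] = 0` and `E[X_J] > 0`.
The `X_i` are a.s. pairwise distinct, so `{J = i}` agrees a.s. with the event that `X_i` is the
strict maximum of `X_0, …, X_{n-1}`. That event lies in `σ(X_j : j ∈ ℕ)`, which is independent of
`Z_i` because all the coordinates `X_j, Z_j` are mutually independent; hence
`E[Z_J] = ∑ᵢ E[Z_i; J = i] = ∑ᵢ P(J = i) E[Z_i] = 0`. Positivity comes from
`2 X_J - X_0 - X_1 ≥ |X_0 - X_1|`, whose right side has positive mean as `X_0 ≠ X_1` a.s.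
-/

namespace ProbabilityTheory

variable {Ω β : Type*} {mΩ : MeasurableSpace Ω} {mβ : MeasurableSpace β} {P : Measure Ω}

lemma IndepFun.iIndepFun_vecCons [IsProbabilityMeasure P] {f g : Ω → β} (hf : AEMeasurable f P)
    (hg : AEMeasurable g P) (h : IndepFun f g P) : iIndepFun ![f, g] P := by
  have hfg : ∀ k, AEMeasurable (![f, g] k) P := Fin.forall_fin_two.2 ⟨hf, hg⟩
  rw [iIndepFun_iff_map_fun_eq_pi_map hfg]
  apply (MeasurableEquiv.piFinTwo fun _ => β).map_measurableEquiv_injective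
  rw [(measurePreserving_piFinTwo _).map_eq, AEMeasurable.map_map_of_aemeasurable
    (MeasurableEquiv.measurable _).aemeasurable (aemeasurable_pi_lambda _ hfg)]
  exact h.map_prod_eq_prod_map_map hf hg

lemma iIndepFun.indep_iSup_comap_fst_comap_snd [IsProbabilityMeasure P] {ι : Type*}
    {X Z : ι → Ω → β} (hX : ∀ i, Measurable (X i)) (hZ : ∀ i, Measurable (Z i))
    (hind : iIndepFun (fun i ω => (X i ω, Z i ω)) P) (hXZ : ∀ i, IndepFun (X i) (Z i) P)
    (i : ι) : Indep (⨆ j, mβ.comap (X j)) (mβ.comap (Z i)) P := by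
  have hmeas : ∀ i k, Measurable (![X i, Z i] k) := fun i => Fin.forall_fin_two.2 ⟨hX i, hZ i⟩
  have hpairs : iIndepFun (fun i ω k => ![X i, Z i] k ω) P := by
    refine (hind.comp (fun _ p => ![p.1, p.2]) fun _ => ?_).congr fun j => ?_
    · exact measurable_pi_iff.2 (Fin.forall_fin_two.2 ⟨measurable_fst, measurable_snd⟩)
    · exact .of_forall fun ω => funext (Fin.forall_fin_two.2 ⟨rfl, rfl⟩)
  have hall := iIndepFun_uncurry' hmeas hpairs
    fun i => (hXZ i).iIndepFun_vecCons (hX i).aemeasurable (hZ i).aemeasurable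
  have h := indep_iSup_of_disjoint (fun p => (hmeas p.1 p.2).comap_le)
    ((iIndepFun_iff_iIndep _ _ _).1 hall) (S := {p | p.2 = 0}) (T := {(i, 1)}) (by simp)
  exact indep_of_indep_of_le h (iSup_le fun j => le_iSup₂_of_le (j, 0) rfl le_rfl)
    (le_iSup₂_of_le (i, 1) rfl le_rfl)

lemma Indep.integral_indicator_eq_zero {m : MeasurableSpace Ω} (hm : m ≤ mΩ) {g : Ω → ℝ}
    (hind : Indep m (MeasurableSpace.comap g inferInstance) P) (hg : AEMeasurable g P)
    (hg0 : ∫ ω, g ω ∂P = 0) {A : Set Ω} (hA : MeasurableSet[m] A) :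
    ∫ ω, A.indicator g ω ∂P = 0 := by
  rw [integral_indicator (hm A hA)]
  simpa [hg0] using hind.setIntegral_eq_mul (f := id) hm hg hA aestronglyMeasurable_id

lemma IndepFun.ae_ne [IsFiniteMeasure P] {U V : Ω → ℝ} {ν : Measure ℝ} [NullSingletonClass ν]
    (h : IndepFun U V P) (hU : AEMeasurable U P) (hV : HasLaw V ν P) : ∀ᵐ ω ∂P, U ω ≠ V ω := by
  have hdiag : MeasurableSet {p : ℝ × ℝ | p.1 = p.2} := measurableSet_diagonal
  rw [ae_iff]
  simp only [ne_eq, not_not]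
  rw [← Set.preimage_ofPred_eq (p := fun p : ℝ × ℝ => p.1 = p.2) (f := fun ω => (U ω, V ω)),
    ← Measure.map_apply_of_aemeasurable (hU.prodMk hV.aemeasurable) hdiag,
    h.map_prod_eq_prod_map_map hU hV.aemeasurable, Measure.prod_apply hdiag, hV.map_eq]
  simp [Set.preimage, measure_singleton]

lemma iIndepFun.ae_pairwise_ne [IsFiniteMeasure P] {ι : Type*} [Countable ι] {X : ι → Ω → ℝ}
    {ν : Measure ℝ} [NullSingletonClass ν] (h : iIndepFun X P) (hX : ∀ i, HasLaw (X i) ν P) :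
    ∀ᵐ ω ∂P, Pairwise fun i j => X i ω ≠ X j ω := by
  refine ae_all_iff.2 fun i => ae_all_iff.2 fun j => ?_
  by_cases hij : i = j
  · exact .of_forall fun _ h => (h hij).elim
  · filter_upwards [(h.indepFun hij).ae_ne (hX i).aemeasurable (hX j)] with ω hω _ using hω

lemma hasLaw_of_map_eq {f : Ω → β} {μ : Measure β} [NeZero μ] (h : P.map f = μ) :
    HasLaw f μ P :=
  ⟨.of_map_ne_zero (h ▸ NeZero.ne μ), h⟩

lemma HasLaw.fst {γ : Type*} {mγ : MeasurableSpace γ} {f : Ω → β × γ} {μ : Measure β}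
    {ν : Measure γ} [IsProbabilityMeasure ν] (h : HasLaw f (μ.prod ν) P) :
    HasLaw (fun ω => (f ω).1) μ P :=
  measurePreserving_fst.hasLaw.comp h

lemma HasLaw.snd {γ : Type*} {mγ : MeasurableSpace γ} {f : Ω → β × γ} {μ : Measure β}
    {ν : Measure γ} [IsProbabilityMeasure μ] [SFinite ν] (h : HasLaw f (μ.prod ν) P) :
    HasLaw (fun ω => (f ω).2) ν P :=
  measurePreserving_snd.hasLaw.comp h

lemma HasLaw.integrable_of_gaussianReal {U : Ω → ℝ} {μ : ℝ} {v : NNReal}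
    (h : HasLaw U (gaussianReal μ v) P) : Integrable U P :=
  (h.map_eq ▸ (memLp_id_gaussianReal 1).integrable le_rfl).comp_aemeasurable h.aemeasurable

lemma HasLaw.integral_eq_of_gaussianReal {U : Ω → ℝ} {μ : ℝ} {v : NNReal}
    (h : HasLaw U (gaussianReal μ v) P) : ∫ ω, U ω ∂P = μ :=
  h.integral_eq.trans integral_id_gaussianReal

end ProbabilityTheory

lemma MeasureTheory.integral_pos_of_le_of_le {Ω : Type*} {mΩ : MeasurableSpace Ω}
    {P : Measure Ω} [NeZero P] {U V W : Ω → ℝ} (hU : Integrable U P)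
    (hV : Integrable V P) (hW : Integrable W P) (hU0 : ∫ ω, U ω ∂P = 0)
    (hV0 : ∫ ω, V ω ∂P = 0) (hUV : ∀ᵐ ω ∂P, U ω ≠ V ω) (hUW : U ≤ᵐ[P] W) (hVW : V ≤ᵐ[P] W) :
    0 < ∫ ω, W ω ∂P := by
  have hdiff : Integrable (fun ω => |U ω - V ω|) P := (hU.sub hV).abs
  have h2W : Integrable (fun ω => 2 * W ω - U ω) P := (hW.const_mul 2).sub hU
  have habs : 0 < ∫ ω, |U ω - V ω| ∂P := by
    refine (integral_nonneg fun ω => abs_nonneg _).lt_of_ne fun h => ?_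
    have hzero := (integral_eq_zero_iff_of_nonneg (fun ω => abs_nonneg _) hdiff).1 h.symm
    obtain ⟨ω, hω, hne⟩ := (hzero.and hUV).exists
    exact hne (sub_eq_zero.1 (abs_eq_zero.1 hω))
  -- `2 W - U - V ≥ 2 max U V - U - V = |U - V|`
  have hle : ∫ ω, |U ω - V ω| ∂P ≤ ∫ ω, (2 * W ω - U ω - V ω) ∂P := by
    refine integral_mono_ae hdiff (h2W.sub hV) ?_
    filter_upwards [hUW, hVW] with ω h1 h2
    rw [abs_le]; constructor <;> linarith
  rw [integral_sub h2W hV, integral_sub (hW.const_mul 2) hU, integral_const_mul, hU0, hV0] at hle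
  linarith

section Argmax

variable {Ω : Type*} {mΩ : MeasurableSpace Ω} {P : Measure Ω} {J : Ω → ℕ} {n : ℕ}
  {A : ℕ → Set Ω}

def strictArgmaxEvent (X : ℕ → Ω → ℝ) (n i : ℕ) : Set Ω := {ω | ∀ j < n, j ≠ i → X j ω < X i ω}

lemma measurableSet_strictArgmaxEvent {m : MeasurableSpace Ω} {X : ℕ → Ω → ℝ}
    (hX : ∀ j, Measurable[m] (X j)) (n i : ℕ) : MeasurableSet[m] (strictArgmaxEvent X n i) := by
  simp only [strictArgmaxEvent, Set.ofPred_forall]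
  exact .iInter fun j => .iInter fun _ => .iInter fun _ => measurableSet_lt (hX j) (hX i)

lemma nullMeasurableSet_strictArgmaxEvent {X : ℕ → Ω → ℝ} (hX : ∀ j, AEMeasurable (X j) P)
    (n i : ℕ) : NullMeasurableSet (strictArgmaxEvent X n i) P := by
  simp only [strictArgmaxEvent, Set.ofPred_forall]
  exact .iInter fun j => .iInter fun _ => .iInter fun _ => nullMeasurableSet_lt (hX j) (hX i)

lemma mem_strictArgmaxEvent_iff {X : ℕ → Ω → ℝ} {n k i : ℕ} {ω : Ω}
    (hmax : ∀ j < n, X j ω ≤ X k ω) (hne : Pairwise fun i j => X i ω ≠ X j ω) (hk : k < n)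
    (hi : i < n) : ω ∈ strictArgmaxEvent X n i ↔ k = i := by
  constructor
  · intro h
    by_contra hki
    exact (h k hk hki).not_ge (hmax i hi)
  · rintro rfl j hj hjk
    exact (hmax j hj).lt_of_ne (hne hjk)

lemma comp_ae_eq_sum_indicator {E : Type*} [AddCommMonoid E]
    (hA : ∀ᵐ ω ∂P, J ω < n ∧ ∀ i < n, (ω ∈ A i ↔ J ω = i)) (f : ℕ → Ω → E) :
    (fun ω => f (J ω) ω) =ᵐ[P] fun ω => ∑ i ∈ Finset.range n, (A i).indicator (f i) ω := by
  filter_upwards [hA] with ω ⟨hJ, hmem⟩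
  rw [Finset.sum_eq_single_of_mem (J ω) (Finset.mem_range.2 hJ) fun i hi hiJ =>
    Set.indicator_of_notMem (fun h => hiJ ((hmem i (Finset.mem_range.1 hi)).1 h).symm) _,
    Set.indicator_of_mem ((hmem _ hJ).2 rfl)]

lemma integrable_comp_of_ae_mem_iff
    (hA : ∀ᵐ ω ∂P, J ω < n ∧ ∀ i < n, (ω ∈ A i ↔ J ω = i)) (hAm : ∀ i, NullMeasurableSet (A i) P)
    {f : ℕ → Ω → ℝ} (hf : ∀ i, Integrable (f i) P) : Integrable (fun ω => f (J ω) ω) P :=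
  (integrable_finsetSum _ fun i _ => (hf i).indicator₀ (hAm i)).congr
    (comp_ae_eq_sum_indicator hA f).symm

lemma integral_comp_of_ae_mem_iff
    (hA : ∀ᵐ ω ∂P, J ω < n ∧ ∀ i < n, (ω ∈ A i ↔ J ω = i)) (hAm : ∀ i, NullMeasurableSet (A i) P)
    {f : ℕ → Ω → ℝ} (hf : ∀ i, Integrable (f i) P) :
    ∫ ω, f (J ω) ω ∂P = ∑ i ∈ Finset.range n, ∫ ω, (A i).indicator (f i) ω ∂P := by
  rw [integral_congr_ae (comp_ae_eq_sum_indicator hA f),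
    integral_finsetSum _ fun i _ => (hf i).indicator₀ (hAm i)]

lemma integral_indicator_strictArgmaxEvent_eq_zero [IsProbabilityMeasure P] {X Z : ℕ → Ω → ℝ}
    (hX : ∀ j, AEMeasurable (X j) P) (hZ : ∀ j, AEMeasurable (Z j) P)
    (hind : iIndepFun (fun j ω => (X j ω, Z j ω)) P) (hXZ : ∀ j, IndepFun (X j) (Z j) P)
    (hZ0 : ∀ j, ∫ ω, Z j ω ∂P = 0) (n i : ℕ) :
    ∫ ω, (strictArgmaxEvent X n i).indicator (Z i) ω ∂P = 0 := by
  -- pass to measurable versions, whose `comap` σ-algebras are sub-σ-algebras of `mΩ`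
  set X' := fun j => (hX j).mk (X j)
  set Z' := fun j => (hZ j).mk (Z j)
  have hX' : ∀ j, Measurable (X' j) := fun j => (hX j).measurable_mk
  have hZ' : ∀ j, Measurable (Z' j) := fun j => (hZ j).measurable_mk
  have hXX' : ∀ j, X j =ᵐ[P] X' j := fun j => (hX j).ae_eq_mk
  have hZZ' : ∀ j, Z j =ᵐ[P] Z' j := fun j => (hZ j).ae_eq_mk
  have hind' : Indep (⨆ j, MeasurableSpace.comap (X' j) inferInstance)
      (MeasurableSpace.comap (Z' i) inferInstance) P :=
    (hind.congr fun j => (hXX' j).prodMk (hZZ' j)).indep_iSup_comap_fst_comap_snd hX' hZ'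
      (fun j => (hXZ j).congr (hXX' j) (hZZ' j)) i
  have hae : (strictArgmaxEvent X n i).indicator (Z i)
      =ᵐ[P] (strictArgmaxEvent X' n i).indicator (Z' i) := by
    filter_upwards [ae_all_iff.2 hXX', hZZ' i] with ω hx hz
    simp only [Set.indicator, strictArgmaxEvent, Set.mem_ofPred_eq, hx, hz]
    congr
  rw [integral_congr_ae hae]
  exact hind'.integral_indicator_eq_zero (iSup_le fun j => (hX' j).comap_le)
    (hZ' i).aemeasurable ((integral_congr_ae (hZZ' i)).symm.trans (hZ0 i))
    (measurableSet_strictArgmaxEvent (fun j => .of_comap_le (le_iSup_of_le j le_rfl)) n i)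

end Argmax

section GaussianPairs

variable {Ω : Type*} {mΩ : MeasurableSpace Ω} {P : Measure Ω} [IsProbabilityMeasure P]
  {X Z : ℕ → Ω → ℝ} {n : ℕ} {J : Ω → ℕ}

lemma ae_pairwise_ne_of_map_eq (hind : iIndepFun (fun i ω => (X i ω, Z i ω)) P)
    (hlaw : ∀ i, Measure.map (fun ω => (X i ω, Z i ω)) P
      = (gaussianReal 0 1).prod (gaussianReal 0 1)) :
    ∀ᵐ ω ∂P, Pairwise fun i j => X i ω ≠ X j ω :=
  have := nullSingletonClass_gaussianReal (μ := 0) one_ne_zero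
  (hind.comp (fun _ => Prod.fst) fun _ => measurable_fst).ae_pairwise_ne
    fun i => (hasLaw_of_map_eq (hlaw i)).fst

lemma ae_mem_strictArgmaxEvent_iff (hind : iIndepFun (fun i ω => (X i ω, Z i ω)) P)
    (hlaw : ∀ i, Measure.map (fun ω => (X i ω, Z i ω)) P
      = (gaussianReal 0 1).prod (gaussianReal 0 1))
    (hJ : ∀ᵐ ω ∂P, J ω < n ∧ ∀ i < n, X i ω ≤ X (J ω) ω) :
    ∀ᵐ ω ∂P, J ω < n ∧ ∀ i < n, (ω ∈ strictArgmaxEvent X n i ↔ J ω = i) := by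
  filter_upwards [hJ, ae_pairwise_ne_of_map_eq hind hlaw] with ω ⟨hJn, hmax⟩ hne
  exact ⟨hJn, fun i hi => mem_strictArgmaxEvent_iff hmax hne hJn hi⟩

lemma integrable_comp_argmax (hind : iIndepFun (fun i ω => (X i ω, Z i ω)) P)
    (hlaw : ∀ i, Measure.map (fun ω => (X i ω, Z i ω)) P
      = (gaussianReal 0 1).prod (gaussianReal 0 1))
    (hJ : ∀ᵐ ω ∂P, J ω < n ∧ ∀ i < n, X i ω ≤ X (J ω) ω) {f : ℕ → Ω → ℝ}
    (hf : ∀ i, Integrable (f i) P) : Integrable (fun ω => f (J ω) ω) P :=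
  integrable_comp_of_ae_mem_iff (ae_mem_strictArgmaxEvent_iff hind hlaw hJ)
    (nullMeasurableSet_strictArgmaxEvent (fun j => (hasLaw_of_map_eq (hlaw j)).fst.aemeasurable) n)
    hf

lemma integral_snd_comp_argmax_eq_zero (hind : iIndepFun (fun i ω => (X i ω, Z i ω)) P)
    (hlaw : ∀ i, Measure.map (fun ω => (X i ω, Z i ω)) P
      = (gaussianReal 0 1).prod (gaussianReal 0 1))
    (hJ : ∀ᵐ ω ∂P, J ω < n ∧ ∀ i < n, X i ω ≤ X (J ω) ω) :
    ∫ ω, Z (J ω) ω ∂P = 0 := by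
  have hX := fun i => (hasLaw_of_map_eq (hlaw i)).fst
  have hZ := fun i => (hasLaw_of_map_eq (hlaw i)).snd
  rw [integral_comp_of_ae_mem_iff (ae_mem_strictArgmaxEvent_iff hind hlaw hJ)
    (nullMeasurableSet_strictArgmaxEvent (fun j => (hX j).aemeasurable) n)
    fun i => (hZ i).integrable_of_gaussianReal]
  exact Finset.sum_eq_zero fun i _ => integral_indicator_strictArgmaxEvent_eq_zero
    (fun j => (hX j).aemeasurable) (fun j => (hZ j).aemeasurable) hind
    (fun j => (indepFun_iff_hasLaw_prodMk_prod (hX j) (hZ j)).2 (hasLaw_of_map_eq (hlaw j)))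
    (fun j => (hZ j).integral_eq_of_gaussianReal) n i

lemma integral_fst_comp_argmax_pos (hind : iIndepFun (fun i ω => (X i ω, Z i ω)) P)
    (hlaw : ∀ i, Measure.map (fun ω => (X i ω, Z i ω)) P
      = (gaussianReal 0 1).prod (gaussianReal 0 1))
    (hJ : ∀ᵐ ω ∂P, J ω < n ∧ ∀ i < n, X i ω ≤ X (J ω) ω) (hn : 2 ≤ n) :
    0 < ∫ ω, X (J ω) ω ∂P := by
  have hX := fun i => (hasLaw_of_map_eq (hlaw i)).fst
  exact integral_pos_of_le_of_le (hX 0).integrable_of_gaussianReal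
    (hX 1).integrable_of_gaussianReal
    (integrable_comp_argmax hind hlaw hJ fun i => (hX i).integrable_of_gaussianReal)
    (hX 0).integral_eq_of_gaussianReal (hX 1).integral_eq_of_gaussianReal
    ((ae_pairwise_ne_of_map_eq hind hlaw).mono fun ω h => h zero_ne_one)
    (hJ.mono fun ω h => h.2 0 (by omega)) (hJ.mono fun ω h => h.2 1 (by omega))

end GaussianPairs

theorem stmt0_general
    {Ω : Type*} [MeasureSpace Ω] [IsProbabilityMeasure (ℙ : Measure Ω)]
    (ρ : ℝ)
    (X Z : ℕ → Ω → ℝ)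
    (hindep : iIndepFun (fun i ω => (X i ω, Z i ω)) ℙ)
    (hlaw : ∀ i, Measure.map (fun ω => (X i ω, Z i ω)) ℙ
      = (gaussianReal 0 1).prod (gaussianReal 0 1))
    (Y : ℕ → Ω → ℝ)
    (hY : ∀ i ω, Y i ω = ρ * X i ω + Real.sqrt (1 - ρ ^ 2) * Z i ω)
    (n : ℕ) (hn : 2 ≤ n)
    (J : Ω → ℕ)
    (hJ : ∀ᵐ ω ∂ℙ, J ω < n ∧ ∀ i < n, X i ω ≤ X (J ω) ω) :
    (∫ ω, Y (J ω) ω) = ρ * ∫ ω, X (J ω) ω ∧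
    (∫ ω, Y (J ω) ω / (∫ ω', X (J ω') ω')) = ρ := by
  have hXJ := integrable_comp_argmax hindep hlaw hJ
    fun i => (hasLaw_of_map_eq (hlaw i)).fst.integrable_of_gaussianReal
  have hZJ := integrable_comp_argmax hindep hlaw hJ
    fun i => (hasLaw_of_map_eq (hlaw i)).snd.integrable_of_gaussianReal
  have hfirst : (∫ ω, Y (J ω) ω) = ρ * ∫ ω, X (J ω) ω := by
    simp_rw [hY]
    rw [integral_add (hXJ.const_mul ρ) (hZJ.const_mul _), integral_const_mul, integral_const_mul,
      integral_snd_comp_argmax_eq_zero hindep hlaw hJ, mul_zero, add_zero]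
  refine ⟨hfirst, ?_⟩
  rw [integral_div, hfirst, mul_div_assoc,
    div_self (integral_fst_comp_argmax_pos hindep hlaw hJ hn).ne', mul_one]

/-- with `J` the (a.s. unique) argmax of `X₁,…,Xₙ`, we have
`E[Y_J] = ρ ⬝ E[X_J]`, hence the max estimator `Y_J / E[X_J]` is unbiased. -/
theorem stmt0
    {Ω : Type*} [MeasureSpace Ω] [IsProbabilityMeasure (ℙ : Measure Ω)]
    (ρ : ℝ) (hρ : ρ ∈ Set.Icc (-1 : ℝ) 1)
    (X Z : ℕ → Ω → ℝ)
    (hindep : iIndepFun (fun i ω => (X i ω, Z i ω)) ℙ)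
    (hlaw : ∀ i, Measure.map (fun ω => (X i ω, Z i ω)) ℙ
      = (gaussianReal 0 1).prod (gaussianReal 0 1))
    (Y : ℕ → Ω → ℝ)
    (hY : ∀ i ω, Y i ω = ρ * X i ω + Real.sqrt (1 - ρ ^ 2) * Z i ω)
    (n : ℕ) (hn : 2 ≤ n)
    (J : Ω → ℕ) (hJmeas : Measurable J)
    (hJ : ∀ᵐ ω ∂ℙ, J ω < n ∧ ∀ i < n, X i ω ≤ X (J ω) ω) :
    (∫ ω, Y (J ω) ω) = ρ * ∫ ω, X (J ω) ω ∧
    (∫ ω, Y (J ω) ω / (∫ ω', X (J ω') ω')) = ρ :=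
  stmt0_general ρ X Z hindep hlaw Y hY n hn J hJ
end

section
/- Let h_g(p) = (−p log₂ p − (1−p) log₂(1−p))/p for p ∈ (0,1) denote the entropy of the geometric distribution with parameter p. Then lim_{t→∞} (2 ln 2) · h_g(Q(t)) / t² = 1; that is, the expected number of bits k = h_g(Q(t)) needed to describe the first index at which a standard normal sequence exceeds the threshold t satisfies k = t²·(1/(2 ln 2) + o(1)) as t → ∞. -/
set_option autoImplicit false

open MeasureTheory Filter

/-- The standard normal tail `Q(x) = ∫ₓ^∞ φ(u) du`. -/
noncomputable def gaussTail (x : ℝ) : ℝ := ∫ u in Set.Ioi x, stdGaussianPDF u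

/-- The entropy `h_g(p) = h(p)/p` of the geometric distribution with parameter `p`, where
`h(p) = -p log₂ p - (1-p) log₂ (1-p)` is the binary entropy. -/
noncomputable def geomEntropy (p : ℝ) : ℝ :=
  (-p * Real.logb 2 p - (1 - p) * Real.logb 2 (1 - p)) / p

/-!
Proof idea: `φ(t + 1) ≤ Q(t) ≤ φ(t) / t`, so `log Q(t) = -t²/2 + o(t²)`. On the other side,
`ln 2 · h_g(p) = -log p + (-(1 - p) log (1 - p)) / p`, and the second term lies in `[0, 1]`
for `0 < p ≤ 1`; so `2 ln 2 · h_g(Q(t)) = -2 log Q(t) + O(1) = t² + o(t²)`.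
-/

open Set Real Topology

lemma stdGaussianPDF_pos (x : ℝ) : 0 < stdGaussianPDF x := by
  unfold stdGaussianPDF; positivity

lemma stdGaussianPDF_le_exp (x : ℝ) : stdGaussianPDF x ≤ exp (-x ^ 2 / 2) := by
  have : 1 ≤ √(2 * π) := one_le_sqrt.2 (by linarith [pi_gt_three])
  exact div_le_self (exp_pos _).le this

lemma integrable_stdGaussianPDF : Integrable stdGaussianPDF := by
  refine ((integrable_exp_neg_mul_sq (b := 1 / 2) (by norm_num)).div_const √(2 * π)).congr
    (.of_forall fun x => ?_)
  rw [stdGaussianPDF]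
  ring_nf

lemma stdGaussianPDF_add_one_le_gaussTail {t : ℝ} (ht : 0 ≤ t) :
    stdGaussianPDF (t + 1) ≤ gaussTail t := by
  have hmono : ∀ u ∈ Ioc t (t + 1), stdGaussianPDF (t + 1) ≤ stdGaussianPDF u := by
    intro u hu
    unfold stdGaussianPDF
    gcongr
    exacts [(ht.trans_lt hu.1).le, hu.2]
  calc stdGaussianPDF (t + 1) = ∫ _ in Ioc t (t + 1), stdGaussianPDF (t + 1) := by simp
    _ ≤ ∫ u in Ioc t (t + 1), stdGaussianPDF u :=
      setIntegral_mono_on (integrableOn_const (by simp)) integrable_stdGaussianPDF.integrableOn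
        measurableSet_Ioc hmono
    _ ≤ gaussTail t :=
      setIntegral_mono_set integrable_stdGaussianPDF.integrableOn
        (.of_forall fun u => (stdGaussianPDF_pos u).le) (.of_forall Ioc_subset_Ioi_self)

lemma gaussTail_pos {t : ℝ} (ht : 0 ≤ t) : 0 < gaussTail t :=
  (stdGaussianPDF_pos _).trans_le (stdGaussianPDF_add_one_le_gaussTail ht)

/-- Mills' inequality. -/
lemma gaussTail_le_stdGaussianPDF_div {t : ℝ} (ht : 0 < t) :
    gaussTail t ≤ stdGaussianPDF t / t := by
  have hexp : ∀ u ∈ Ioi t,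
      stdGaussianPDF u ≤ stdGaussianPDF t * exp (t ^ 2) * exp (-t * u) := by
    intro u _
    rw [stdGaussianPDF, stdGaussianPDF, div_mul_eq_mul_div, div_mul_eq_mul_div, ← exp_add,
      ← exp_add]
    gcongr
    nlinarith [sq_nonneg (u - t)]
  calc gaussTail t ≤ ∫ u in Ioi t, stdGaussianPDF t * exp (t ^ 2) * exp (-t * u) :=
        setIntegral_mono_on integrable_stdGaussianPDF.integrableOn
          ((integrableOn_exp_mul_Ioi (by linarith) t).const_mul _) measurableSet_Ioi hexp
    _ = stdGaussianPDF t / t := by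
        rw [integral_const_mul, integral_exp_mul_Ioi (by linarith), neg_div_neg_eq,
          mul_div_assoc', mul_assoc, ← exp_add]
        simp [sq]

lemma gaussTail_le_exp {t : ℝ} (ht : 1 ≤ t) : gaussTail t ≤ exp (-t ^ 2 / 2) :=
  calc gaussTail t ≤ stdGaussianPDF t / t := gaussTail_le_stdGaussianPDF_div (by linarith)
    _ ≤ stdGaussianPDF t := div_le_self (stdGaussianPDF_pos t).le ht
    _ ≤ exp (-t ^ 2 / 2) := stdGaussianPDF_le_exp t

lemma tendsto_log_gaussTail_div_sq :
    Tendsto (fun t => log (gaussTail t) / t ^ 2) atTop (𝓝 (-(1 / 2))) := by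
  set c := log √(2 * π)
  have hlower :
      Tendsto (fun t : ℝ => (-(t + 1) ^ 2 / 2 - c) / t ^ 2) atTop (𝓝 (-(1 / 2))) := by
    have hcont : Tendsto (fun s : ℝ => -(1 + s) ^ 2 / 2 - c * s ^ 2) (𝓝 0) (𝓝 (-(1 / 2))) :=
      (by fun_prop : Continuous fun s : ℝ => -(1 + s) ^ 2 / 2 - c * s ^ 2).tendsto' _ _
        (by norm_num)
    refine (hcont.comp tendsto_inv_atTop_zero).congr' ?_
    filter_upwards [eventually_ne_atTop 0] with t ht
    simp only [Function.comp_apply]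
    field_simp
  refine tendsto_of_tendsto_of_tendsto_of_le_of_le' hlower tendsto_const_nhds ?_ ?_
  · filter_upwards [eventually_ge_atTop 0] with t ht
    have := log_le_log (stdGaussianPDF_pos _) (stdGaussianPDF_add_one_le_gaussTail ht)
    rw [stdGaussianPDF, log_div (exp_pos _).ne' (by positivity), log_exp] at this
    gcongr
  · filter_upwards [eventually_ge_atTop 1] with t ht
    have := (log_le_iff_le_exp (gaussTail_pos (by linarith))).2 (gaussTail_le_exp ht)
    rw [div_le_iff₀ (by positivity)]
    linarith

lemma log_two_mul_geomEntropy {p : ℝ} (hp : p ≠ 0) :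
    log 2 * geomEntropy p = -log p + negMulLog (1 - p) / p := by
  rw [geomEntropy, logb, logb, negMulLog]
  field_simp
  ring

lemma negMulLog_one_sub_div_mem_Icc {p : ℝ} (hp : p ∈ Ioc 0 1) :
    negMulLog (1 - p) / p ∈ Icc 0 1 := by
  obtain ⟨hp0, hp1⟩ := hp
  refine ⟨div_nonneg (negMulLog_nonneg (by linarith) (by linarith)) hp0.le, ?_⟩
  rw [div_le_one hp0]
  simpa using negMulLog_le_one_sub_self (x := 1 - p) (by linarith)

lemma tendsto_log_two_mul_geomEntropy_div {α : Type*} {l : Filter α} {p g : α → ℝ} {c : ℝ}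
    (hp : ∀ᶠ x in l, p x ∈ Ioc 0 1) (hg : Tendsto g l atTop)
    (hlog : Tendsto (fun x => log (p x) / g x) l (𝓝 (-c))) :
    Tendsto (fun x => log 2 * geomEntropy (p x) / g x) l (𝓝 c) := by
  have hrest : Tendsto (fun x => negMulLog (1 - p x) / p x / g x) l (𝓝 0) := by
    refine tendsto_of_tendsto_of_tendsto_of_le_of_le' tendsto_const_nhds
      ((tendsto_const_nhds (x := (1 : ℝ))).div_atTop hg) ?_ ?_
    all_goals filter_upwards [hp, hg.eventually_gt_atTop 0] with x hpx hgx
    · exact div_nonneg (negMulLog_one_sub_div_mem_Icc hpx).1 hgx.le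
    · gcongr
      exact (negMulLog_one_sub_div_mem_Icc hpx).2
  have := hlog.neg.add hrest
  rw [neg_neg, add_zero] at this
  refine this.congr' ?_
  filter_upwards [hp] with x hpx
  rw [log_two_mul_geomEntropy hpx.1.ne', add_div, neg_div]

/-- `(2 ln 2) · h_g(Q(t)) / t² → 1` as `t → ∞`, i.e. the expected number of
bits `k = h_g(Q(t))` satisfies `k = t² (1/(2 ln 2) + o(1))`. -/
theorem stmt6 :
    Tendsto (fun t : ℝ => 2 * Real.log 2 * geomEntropy (gaussTail t) / t ^ 2)
      atTop (nhds 1) := by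
  have hmem : ∀ᶠ t in atTop, gaussTail t ∈ Ioc 0 1 := by
    filter_upwards [eventually_ge_atTop 1] with t ht
    exact ⟨gaussTail_pos (by linarith),
      (gaussTail_le_exp ht).trans (exp_le_one_iff.2 (by nlinarith))⟩
  convert (tendsto_log_two_mul_geomEntropy_div hmem (tendsto_pow_atTop two_ne_zero)
    tendsto_log_gaussTail_div_sq).const_mul 2 using 1
  · ext t
    ring
  · norm_num
end

section
/- Let M be a random d×d real matrix whose d² entries are mutually independent, whose diagonal entries are identically distributed, and whose off-diagonal entries are identically distributed with a symmetric distribution (M_{ij} has the same law as −M_{ij} for i ≠ j). Assume M is almost surely invertible and that every entry of (M Mᵀ)⁻¹ is integrable. Then E[(M Mᵀ)⁻¹] is a scalar multiple of the d×d identity matrix. -/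
/-!
Relabelling the indices by a permutation `σ` (`M ↦ M.submatrix σ σ`) and flipping the signs of
rows and columns together (`M ↦ D M D` with `D = diagonal ε`, `ε i = ±1`) replace each entry of
`M` by a random variable with the same law as that entry, by the hypotheses on the diagonal,
off-diagonal and symmetric laws; independence upgrades this to equality of the joint law of the
whole matrix. Both maps are conjugations by orthogonal matrices, under which `(M Mᵀ)⁻¹`
transforms the same way, so `E[(M Mᵀ)⁻¹]` is invariant under conjugation by signed permutation
matrices. A sign flip at a single index kills the off-diagonal entries and transpositions
equalise the diagonal ones.
-/

set_option autoImplicit false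

open MeasureTheory ProbabilityTheory Matrix

instance Matrix.instMeasurableSpace {m n α : Type*} [MeasurableSpace α] :
    MeasurableSpace (Matrix m n α) :=
  inferInstanceAs (MeasurableSpace (m → n → α))

instance Matrix.instBorelSpace {m n : Type*} [Countable m] [Countable n] :
    BorelSpace (Matrix m n ℝ) :=
  inferInstanceAs (BorelSpace (m → n → ℝ))

namespace Matrix

section Algebra

variable {n R : Type*} [Fintype n] [DecidableEq n] [CommRing R]

lemma inv_mul_transpose_conj_orthogonal (A U : Matrix n n R) (hU : Uᵀ * U = 1) :
    ((U * A * Uᵀ) * (U * A * Uᵀ)ᵀ)⁻¹ = U * (A * Aᵀ)⁻¹ * Uᵀ := by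
  have hUinv : U⁻¹ = Uᵀ := inv_eq_left_inv hU
  have hUtinv : Uᵀ⁻¹ = U := inv_eq_left_inv (mul_eq_one_comm.1 hU)
  have hgram : (U * A * Uᵀ) * (U * A * Uᵀ)ᵀ = U * (A * Aᵀ) * Uᵀ := by
    simp only [transpose_mul, transpose_transpose, Matrix.mul_assoc]
    rw [← Matrix.mul_assoc Uᵀ U, hU, Matrix.one_mul]
  rw [hgram, mul_inv_rev, mul_inv_rev, hUinv, hUtinv, Matrix.mul_assoc]

lemma inv_mul_transpose_submatrix (A : Matrix n n R) (σ : Equiv.Perm n) :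
    (A.submatrix σ σ * (A.submatrix σ σ)ᵀ)⁻¹ = ((A * Aᵀ)⁻¹).submatrix σ σ := by
  rw [transpose_submatrix, submatrix_mul_equiv, inv_submatrix_equiv]

lemma diagonal_transpose_mul_diagonal_of_mul_self_eq_one {ε : n → R} (hε : ∀ i, ε i * ε i = 1) :
    (diagonal ε)ᵀ * diagonal ε = 1 := by
  rw [diagonal_transpose, diagonal_mul_diagonal, ← diagonal_one]
  exact congrArg diagonal (funext hε)

lemma exists_eq_smul_one_of_signed_perm_invariant [IsDomain R] [CharZero R] (A : Matrix n n R)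
    (hperm : ∀ σ : Equiv.Perm n, A.submatrix σ σ = A)
    (hsign : ∀ ε : n → R, (∀ i, ε i * ε i = 1) → diagonal ε * A * diagonal ε = A) :
    ∃ c : R, A = c • 1 := by
  have hoff : ∀ i j, i ≠ j → A i j = 0 := by
    intro i j hij
    have h := congrFun (congrFun (hsign (fun k => if k = i then -1 else 1)
      (fun k => by split_ifs <;> norm_num)) i) j
    simp only [diagonal_mul, mul_diagonal, if_neg hij.symm] at h
    exact neg_eq_self.mp (by simpa using h)
  have hdiag : ∀ i j, A i i = A j j := fun i j => by
    simpa using congrFun (congrFun (hperm (Equiv.swap i j)) i) i |>.symm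
  rcases isEmpty_or_nonempty n with hn | ⟨⟨i₀⟩⟩
  · exact ⟨0, Subsingleton.elim _ _⟩
  · refine ⟨A i₀ i₀, ?_⟩
    ext i j
    rcases eq_or_ne i j with rfl | hij
    · simp [hdiag i i₀]
    · simp [hoff i j hij, hij]

end Algebra

lemma measurable_inv {n : Type*} [Fintype n] [DecidableEq n] :
    Measurable fun X : Matrix n n ℝ => X⁻¹ := by
  have hdet : Measurable fun X : Matrix n n ℝ => X.det⁻¹ :=
    (continuous_id.matrix_det).measurable.inv
  refine measurable_pi_lambda _ fun i => measurable_pi_lambda _ fun j => ?_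
  simp only [inv_def, Ring.inverse_eq_inv', smul_apply, smul_eq_mul]
  exact hdet.mul (continuous_id.matrix_adjugate.matrix_elem i j).measurable

lemma measurable_inv_mul_transpose {n : Type*} [Fintype n] [DecidableEq n] :
    Measurable fun X : Matrix n n ℝ => (X * Xᵀ)⁻¹ :=
  measurable_inv.comp (continuous_id.matrix_mul continuous_id.matrix_transpose).measurable

section Probability

variable {Ω Ω' : Type*} [MeasurableSpace Ω] [MeasurableSpace Ω'] {μ : Measure Ω} {ν : Measure Ω'}

lemma identDistrib_of_iIndepFun {m n β : Type*} [Countable m] [Countable n] [MeasurableSpace β]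
    {M : Ω → Matrix m n β} {N : Ω' → Matrix m n β}
    (hM : iIndepFun (fun (p : m × n) ω => M ω p.1 p.2) μ)
    (hN : iIndepFun (fun (p : m × n) ω => N ω p.1 p.2) ν)
    (h : ∀ i j, IdentDistrib (fun ω => M ω i j) (fun ω => N ω i j) μ ν) :
    IdentDistrib M N μ ν := by
  have hcurry : Measurable fun f : m × n → β => of fun i j => f (i, j) :=
    measurable_pi_lambda _ fun i => measurable_pi_lambda _ fun j => measurable_pi_apply (i, j)
  exact (IdentDistrib.pi (fun p => h p.1 p.2) hM hN).comp hcurry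

lemma identDistrib_submatrix {n : Type*} [Countable n] {M : Ω → Matrix n n ℝ}
    (hindep : iIndepFun (fun (p : n × n) ω => M ω p.1 p.2) μ)
    (hdiag : ∀ i j, IdentDistrib (fun ω => M ω i i) (fun ω => M ω j j) μ μ)
    (hoff : ∀ i j k l, i ≠ j → k ≠ l → IdentDistrib (fun ω => M ω i j) (fun ω => M ω k l) μ μ)
    (σ : Equiv.Perm n) :
    IdentDistrib M (fun ω => (M ω).submatrix σ σ) μ μ := by
  refine identDistrib_of_iIndepFun hindep
    (hindep.precomp (g := Prod.map σ σ) (σ.injective.prodMap σ.injective))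
    fun i j => ?_
  rcases eq_or_ne i j with rfl | hij
  · exact hdiag i (σ i)
  · exact hoff i j (σ i) (σ j) hij (σ.injective.ne hij)

lemma identDistrib_diagonal_mul_mul_diagonal {n : Type*} [Fintype n] [DecidableEq n]
    {M : Ω → Matrix n n ℝ} (hindep : iIndepFun (fun (p : n × n) ω => M ω p.1 p.2) μ)
    (hmeas : ∀ i, AEMeasurable (fun ω => M ω i i) μ)
    (hsym : ∀ i j, i ≠ j → IdentDistrib (fun ω => M ω i j) (fun ω => -(M ω i j)) μ μ)
    {ε : n → ℝ} (hε : ∀ i, ε i * ε i = 1) :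
    IdentDistrib M (fun ω => diagonal ε * M ω * diagonal ε) μ μ := by
  have hindep' : iIndepFun (fun (p : n × n) ω => (diagonal ε * M ω * diagonal ε) p.1 p.2) μ := by
    simpa only [diagonal_mul, mul_diagonal, Function.comp_def]
      using hindep.comp (fun p x => ε p.1 * x * ε p.2) fun p => by fun_prop
  refine identDistrib_of_iIndepFun hindep hindep' fun i j => ?_
  simp only [diagonal_mul, mul_diagonal]
  rcases eq_or_ne i j with rfl | hij
  · simp only [mul_comm (ε i), mul_assoc, hε, mul_one]
    exact IdentDistrib.refl (hmeas i)
  · have hsq : (ε i * ε j) * (ε i * ε j) = 1 := by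
      rw [mul_mul_mul_comm, hε, hε, mul_one]
    simp only [mul_right_comm _ _ (ε j)]
    rcases mul_self_eq_one_iff.1 hsq with h | h
    · simpa only [h, one_mul] using IdentDistrib.refl (hsym i j hij).aemeasurable_fst
    · simpa only [h, neg_one_mul] using hsym i j hij

lemma integral_inv_mul_transpose_apply_eq {n : Type*} [Fintype n] [DecidableEq n]
    {M : Ω → Matrix n n ℝ} {N : Ω' → Matrix n n ℝ} (h : IdentDistrib M N μ ν) (i j : n) :
    ∫ ω, (M ω * (M ω)ᵀ)⁻¹ i j ∂μ = ∫ ω, (N ω * (N ω)ᵀ)⁻¹ i j ∂ν :=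
  (h.comp ((measurable_pi_apply j).comp
    ((measurable_pi_apply i).comp measurable_inv_mul_transpose))).integral_eq

variable {n : Type*} [Fintype n] [DecidableEq n] {M : Ω → Matrix n n ℝ}

lemma submatrix_integral_inv_mul_transpose
    (hindep : iIndepFun (fun (p : n × n) ω => M ω p.1 p.2) μ)
    (hdiag : ∀ i j, IdentDistrib (fun ω => M ω i i) (fun ω => M ω j j) μ μ)
    (hoff : ∀ i j k l, i ≠ j → k ≠ l → IdentDistrib (fun ω => M ω i j) (fun ω => M ω k l) μ μ)
    (σ : Equiv.Perm n) :
    (of fun i j => ∫ ω, (M ω * (M ω)ᵀ)⁻¹ i j ∂μ).submatrix σ σ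
      = of fun i j => ∫ ω, (M ω * (M ω)ᵀ)⁻¹ i j ∂μ := by
  ext i j
  simp only [submatrix_apply, of_apply,
    integral_inv_mul_transpose_apply_eq (identDistrib_submatrix hindep hdiag hoff σ) i j,
    inv_mul_transpose_submatrix]

lemma diagonal_mul_integral_inv_mul_transpose_mul_diagonal
    (hindep : iIndepFun (fun (p : n × n) ω => M ω p.1 p.2) μ)
    (hmeas : ∀ i, AEMeasurable (fun ω => M ω i i) μ)
    (hsym : ∀ i j, i ≠ j → IdentDistrib (fun ω => M ω i j) (fun ω => -(M ω i j)) μ μ)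
    {ε : n → ℝ} (hε : ∀ i, ε i * ε i = 1) :
    diagonal ε * (of fun i j => ∫ ω, (M ω * (M ω)ᵀ)⁻¹ i j ∂μ) * diagonal ε
      = of fun i j => ∫ ω, (M ω * (M ω)ᵀ)⁻¹ i j ∂μ := by
  have hconj : ∀ A : Matrix n n ℝ,
      ((diagonal ε * A * diagonal ε) * (diagonal ε * A * diagonal ε)ᵀ)⁻¹
        = diagonal ε * (A * Aᵀ)⁻¹ * diagonal ε := fun A => by
    simpa only [diagonal_transpose] using
      inv_mul_transpose_conj_orthogonal A _ (diagonal_transpose_mul_diagonal_of_mul_self_eq_one hε)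
  ext i j
  calc (diagonal ε * (of fun i j => ∫ ω, (M ω * (M ω)ᵀ)⁻¹ i j ∂μ) * diagonal ε) i j
      = ∫ ω, (diagonal ε * (M ω * (M ω)ᵀ)⁻¹ * diagonal ε) i j ∂μ := by
        simp only [diagonal_mul, mul_diagonal, of_apply, integral_mul_const, integral_const_mul]
    _ = ∫ ω, (M ω * (M ω)ᵀ)⁻¹ i j ∂μ := by
        simp only [← hconj]
        exact (integral_inv_mul_transpose_apply_eq
          (identDistrib_diagonal_mul_mul_diagonal hindep hmeas hsym hε) i j).symm

end Probability

end Matrix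

theorem stmt11_general
    {Ω : Type*} [MeasureSpace Ω]
    (d : ℕ) (M : Ω → Matrix (Fin d) (Fin d) ℝ)
    (hindep : iIndepFun (fun (p : Fin d × Fin d) ω => M ω p.1 p.2) ℙ)
    (hdiag : ∀ i j, IdentDistrib (fun ω => M ω i i) (fun ω => M ω j j) ℙ ℙ)
    (hoff : ∀ i j k l, i ≠ j → k ≠ l →
      IdentDistrib (fun ω => M ω i j) (fun ω => M ω k l) ℙ ℙ)
    (hsym : ∀ i j, i ≠ j →
      IdentDistrib (fun ω => M ω i j) (fun ω => -(M ω i j)) ℙ ℙ) :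
    ∃ c : ℝ, (Matrix.of fun i j => ∫ ω, ((M ω * (M ω)ᵀ)⁻¹) i j)
      = c • (1 : Matrix (Fin d) (Fin d) ℝ) :=
  exists_eq_smul_one_of_signed_perm_invariant _
    (submatrix_integral_inv_mul_transpose hindep hdiag hoff)
    fun _ hε => diagonal_mul_integral_inv_mul_transpose_mul_diagonal hindep
      (fun i => (hdiag i i).aemeasurable_fst) hsym hε

/-- if the entries of a random matrix `M` are mutually independent, the
diagonal entries identically distributed, the off-diagonal entries identically distributed
with a symmetric distribution, `M` is almost surely invertible, and every entry of
`(M Mᵀ)⁻¹` is integrable, then `E[(M Mᵀ)⁻¹]` is a scalar multiple of the identity. -/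
theorem stmt11
    {Ω : Type*} [MeasureSpace Ω] [IsProbabilityMeasure (ℙ : Measure Ω)]
    (d : ℕ) (M : Ω → Matrix (Fin d) (Fin d) ℝ)
    (hmeas : ∀ i j, Measurable fun ω => M ω i j)
    (hindep : iIndepFun (fun (p : Fin d × Fin d) ω => M ω p.1 p.2) ℙ)
    (hdiag : ∀ i j, IdentDistrib (fun ω => M ω i i) (fun ω => M ω j j) ℙ ℙ)
    (hoff : ∀ i j k l, i ≠ j → k ≠ l →
      IdentDistrib (fun ω => M ω i j) (fun ω => M ω k l) ℙ ℙ)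
    (hsym : ∀ i j, i ≠ j →
      IdentDistrib (fun ω => M ω i j) (fun ω => -(M ω i j)) ℙ ℙ)
    (hinv : ∀ᵐ ω ∂ℙ, IsUnit (M ω))
    (hint : ∀ i j, Integrable (fun ω => ((M ω * (M ω)ᵀ)⁻¹) i j) ℙ) :
    ∃ c : ℝ, (Matrix.of fun i j => ∫ ω, ((M ω * (M ω)ᵀ)⁻¹) i j)
      = c • (1 : Matrix (Fin d) (Fin d) ℝ) :=
  stmt11_general d M hindep hdiag hoff hsym
end

section
/- (Johnson's singular value bound.) Let B = (b_{ij}) be a real d×d matrix and set m = min_{i∈[d]} ( |b_{ii}| − (1/2)( Σ_{j≠i} |b_{ij}| + Σ_{j≠i} |b_{ji}| ) ). Then every x ∈ ℝ^d satisfies ‖Bx‖₂ ≥ m·‖x‖₂; that is, the smallest singular value of B is at least m. -/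
open Matrix Finset

/-!
Let `s i = ±1` be the sign of `B i i`, so that the diagonal of `diagonal s * B` is `|B i i|`
while the absolute off-diagonal row and column sums are those of `B`. Bounding each off-diagonal
term by `|a x y| ≤ |a| (x² + y²) / 2` gives the Gershgorin-type estimate
`m ‖x‖² ≤ xᵀ (diagonal s * B) x = ⟨s x, B x⟩`, and Cauchy–Schwarz bounds the right-hand side by
`‖x‖ ‖B x‖`.
-/

theorem Finset.sum_sum_erase_comm {ι M : Type*} [Fintype ι] [DecidableEq ι] [AddCommMonoid M]
    (f : ι → ι → M) :
    ∑ i, ∑ j ∈ univ.erase i, f i j = ∑ j, ∑ i ∈ univ.erase j, f i j :=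
  sum_comm' fun i j => by simp [ne_comm]

theorem neg_abs_mul_add_sq_div_two_le (a x y : ℝ) : -(|a| * (x ^ 2 + y ^ 2) / 2) ≤ a * x * y := by
  have hxy : 2 * |x| * |y| ≤ x ^ 2 + y ^ 2 := by
    simpa only [sq_abs] using two_mul_le_add_sq |x| |y|
  have habs : |a * x * y| = |a| * (|x| * |y|) := by rw [abs_mul, abs_mul, mul_assoc]
  nlinarith [neg_abs_le (a * x * y), abs_nonneg a]

namespace Matrix

variable {ι : Type*} [Fintype ι] [DecidableEq ι]

noncomputable def offDiagAbsSumAvg (A : Matrix ι ι ℝ) (i : ι) : ℝ :=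
  (1 / 2) * ((∑ j ∈ univ.erase i, |A i j|) + ∑ j ∈ univ.erase i, |A j i|)

theorem sum_diag_sub_offDiagAbsSumAvg_mul_sq_le (A : Matrix ι ι ℝ) (x : ι → ℝ) :
    ∑ i, (A i i - offDiagAbsSumAvg A i) * x i ^ 2 ≤ x ⬝ᵥ A *ᵥ x := by
  have hexpand : x ⬝ᵥ A *ᵥ x = ∑ i, (A i i * x i ^ 2 + ∑ j ∈ univ.erase i, A i j * x i * x j) := by
    refine sum_congr rfl fun i _ => ?_
    rw [mulVec, dotProduct, mul_sum, ← add_sum_erase _ _ (mem_univ i)]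
    congr 1
    · ring
    · exact sum_congr rfl fun j _ => by ring
  have hoff : ∀ i, ∑ j ∈ univ.erase i, -(|A i j| * (x i ^ 2 + x j ^ 2) / 2)
      ≤ ∑ j ∈ univ.erase i, A i j * x i * x j :=
    fun i => sum_le_sum fun j _ => neg_abs_mul_add_sq_div_two_le _ _ _
  have hcol : ∑ i, ∑ j ∈ univ.erase i, |A i j| * x j ^ 2
      = ∑ i, (∑ j ∈ univ.erase i, |A j i|) * x i ^ 2 := by
    simp only [sum_sum_erase_comm (fun i j => |A i j| * x j ^ 2), sum_mul]
  set f : ι → ℝ := fun i => A i i * x i ^ 2 - 1 / 2 * (∑ j ∈ univ.erase i, |A i j|) * x i ^ 2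
  calc ∑ i, (A i i - offDiagAbsSumAvg A i) * x i ^ 2
      = ∑ i, f i - 1 / 2 * ∑ i, (∑ j ∈ univ.erase i, |A j i|) * x i ^ 2 := by
        rw [mul_sum, ← sum_sub_distrib]
        exact sum_congr rfl fun i _ => by simp only [f, offDiagAbsSumAvg]; ring
    _ = ∑ i, f i - 1 / 2 * ∑ i, ∑ j ∈ univ.erase i, |A i j| * x j ^ 2 := by rw [hcol]
    _ = ∑ i, (A i i * x i ^ 2 + ∑ j ∈ univ.erase i, -(|A i j| * (x i ^ 2 + x j ^ 2) / 2)) := by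
        rw [mul_sum, ← sum_sub_distrib]
        refine sum_congr rfl fun i _ => ?_
        have hsplit : ∑ j ∈ univ.erase i, -(|A i j| * (x i ^ 2 + x j ^ 2) / 2)
            = -(1 / 2 * (∑ j ∈ univ.erase i, |A i j|) * x i ^ 2)
              - 1 / 2 * ∑ j ∈ univ.erase i, |A i j| * x j ^ 2 := by
          rw [mul_sum, sum_mul, mul_sum, ← sum_neg_distrib, ← sum_sub_distrib]
          exact sum_congr rfl fun j _ => by ring
        rw [hsplit]
        ring
    _ ≤ x ⬝ᵥ A *ᵥ x := (sum_le_sum fun i _ => add_le_add_right (hoff i) _).trans_eq hexpand.symm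

theorem offDiagAbsSumAvg_diagonal_mul {s : ι → ℝ} (hs : ∀ i, |s i| = 1) (B : Matrix ι ι ℝ) :
    offDiagAbsSumAvg (diagonal s * B) = offDiagAbsSumAvg B := by
  ext i
  simp only [offDiagAbsSumAvg, diagonal_mul, abs_mul, hs, one_mul]

theorem mul_sqrt_sum_sq_le_sqrt_sum_sq_mulVec (B : Matrix ι ι ℝ) {m : ℝ}
    (hm : ∀ i, m ≤ |B i i| - offDiagAbsSumAvg B i) (x : ι → ℝ) :
    m * √(∑ i, x i ^ 2) ≤ √(∑ i, (B *ᵥ x) i ^ 2) := by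
  set s : ι → ℝ := fun i => if 0 ≤ B i i then 1 else -1
  have hs_abs : ∀ i, |s i| = 1 := fun i => by simp only [s]; split_ifs <;> norm_num
  have hs_diag : ∀ i, s i * B i i = |B i i| := fun i => by
    simp only [s]; split_ifs with h
    · rw [abs_of_nonneg h, one_mul]
    · rw [abs_of_neg (not_le.mp h), neg_one_mul]
  have hquad : m * ∑ i, x i ^ 2 ≤ x ⬝ᵥ (diagonal s * B) *ᵥ x :=
    calc m * ∑ i, x i ^ 2 ≤ ∑ i, (|B i i| - offDiagAbsSumAvg B i) * x i ^ 2 := by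
          rw [mul_sum]
          exact sum_le_sum fun i _ => mul_le_mul_of_nonneg_right (hm i) (sq_nonneg _)
      _ = ∑ i, ((diagonal s * B) i i - offDiagAbsSumAvg (diagonal s * B) i) * x i ^ 2 := by
          simp only [offDiagAbsSumAvg_diagonal_mul hs_abs, diagonal_mul, hs_diag]
      _ ≤ x ⬝ᵥ (diagonal s * B) *ᵥ x := sum_diag_sub_offDiagAbsSumAvg_mul_sq_le _ _
  have hcs : x ⬝ᵥ (diagonal s * B) *ᵥ x ≤ √(∑ i, x i ^ 2) * √(∑ i, (B *ᵥ x) i ^ 2) :=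
    calc x ⬝ᵥ (diagonal s * B) *ᵥ x = ∑ i, (s i * x i) * (B *ᵥ x) i := by
          rw [← mulVec_mulVec, dotProduct]
          exact sum_congr rfl fun i _ => by rw [mulVec_diagonal]; ring
      _ ≤ √(∑ i, (s i * x i) ^ 2) * √(∑ i, (B *ᵥ x) i ^ 2) := Real.sum_mul_le_sqrt_mul_sqrt _ _ _
      _ = √(∑ i, x i ^ 2) * √(∑ i, (B *ᵥ x) i ^ 2) := by
          simp only [mul_pow, ← sq_abs (s _), hs_abs, one_pow, one_mul]
  have hX : 0 ≤ ∑ i, x i ^ 2 := sum_nonneg fun i _ => sq_nonneg _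
  rcases hX.eq_or_lt with hzero | hpos
  · rw [← hzero, Real.sqrt_zero, mul_zero]
    exact Real.sqrt_nonneg _
  · refine le_of_mul_le_mul_left ?_ (Real.sqrt_pos.mpr hpos)
    calc √(∑ i, x i ^ 2) * (m * √(∑ i, x i ^ 2)) = m * ∑ i, x i ^ 2 := by
          rw [mul_left_comm, Real.mul_self_sqrt hX]
      _ ≤ _ := hquad.trans hcs

end Matrix

/-- Johnson's singular value bound: for a real `d × d` matrix `B` with
`m = minᵢ (|bᵢᵢ| - ½(Σ_{j≠i} |bᵢⱼ| + Σ_{j≠i} |bⱼᵢ|))`, every `x ∈ ℝᵈ` satisfies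
`‖Bx‖₂ ≥ m ‖x‖₂`, i.e. the smallest singular value of `B` is at least `m`. -/
theorem stmt13 (d : ℕ) (hd : 0 < d) (B : Matrix (Fin d) (Fin d) ℝ) :
    ∀ x : Fin d → ℝ,
      (Finset.univ.inf' (Finset.univ_nonempty_iff.mpr (Fin.pos_iff_nonempty.mp hd))
          fun i => |B i i| - (1 / 2) *
            ((∑ j ∈ Finset.univ.erase i, |B i j|) + ∑ j ∈ Finset.univ.erase i, |B j i|))
        * Real.sqrt (∑ i, x i ^ 2) ≤ Real.sqrt (∑ i, (B.mulVec x i) ^ 2) :=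
  B.mul_sqrt_sum_sq_le_sqrt_sum_sq_mulVec fun i => inf'_le _ (mem_univ i)
end

section
/- Let M be a real d×d matrix and let a > 0, b ≥ 0 satisfy a > (d−1)b. If |M_{ii}| ≥ a for every i and |M_{ij}| ≤ b for every i ≠ j, then M is invertible and tr( (M Mᵀ)⁻¹ ) ≤ d / (a − (d−1)b)². -/
set_option autoImplicit false

open Matrix

/-!
Put `c = a - (d - 1) b`. Row-wise diagonal dominance with margin `c` gives `c ‖v‖∞ ≤ ‖M v‖∞`:
look at a coordinate where `|v|` is maximal. Applying this to `v = M⁻¹ x`, with `x` the sign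
vector of the `i`-th row of `M⁻¹`, bounds every absolute row sum of `M⁻¹` by `1 / c`
(Varah's bound). Finally `tr ((M Mᵀ)⁻¹) = tr ((M⁻¹)ᵀ M⁻¹)` is the sum of the squared entries
of `M⁻¹`, and each row contributes at most the square of its absolute row sum, i.e. `1 / c²`.
-/

lemma abs_sign_le_one (x : ℝ) : |(SignType.sign x : ℝ)| ≤ 1 := by
  rcases lt_trichotomy x 0 with h | h | h <;> simp [h, sign_neg, sign_pos]

namespace Matrix

variable {ι : Type*} [Fintype ι]

lemma trace_transpose_mul_self (N : Matrix ι ι ℝ) : trace (Nᵀ * N) = ∑ i, ∑ j, N i j ^ 2 := by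
  rw [Finset.sum_comm]
  simp [trace, mul_apply, sq]

variable [DecidableEq ι]

lemma sub_sum_erase_mul_abs_le_abs_mulVec_apply (M : Matrix ι ι ℝ) (v : ι → ℝ) {k : ι}
    (hk : ∀ j, |v j| ≤ |v k|) :
    (|M k k| - ∑ j ∈ Finset.univ.erase k, |M k j|) * |v k| ≤ |(M *ᵥ v) k| := by
  have hsplit : (M *ᵥ v) k = M k k * v k + ∑ j ∈ Finset.univ.erase k, M k j * v j :=
    (Finset.add_sum_erase _ (fun j ↦ M k j * v j) (Finset.mem_univ k)).symm
  have hoff : |∑ j ∈ Finset.univ.erase k, M k j * v j|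
      ≤ (∑ j ∈ Finset.univ.erase k, |M k j|) * |v k| := by
    rw [Finset.sum_mul]
    refine (Finset.abs_sum_le_sum_abs _ _).trans (Finset.sum_le_sum fun j _ ↦ ?_)
    rw [abs_mul]
    exact mul_le_mul_of_nonneg_left (hk j) (abs_nonneg _)
  rw [hsplit, sub_mul, ← abs_mul]
  linarith [abs_sub_abs_le_abs_add (M k k * v k) (∑ j ∈ Finset.univ.erase k, M k j * v j)]

variable {M : Matrix ι ι ℝ} {c : ℝ}

lemma exists_mul_abs_le_abs_mulVec_apply
    (hdom : ∀ k, c ≤ |M k k| - ∑ j ∈ Finset.univ.erase k, |M k j|) (hc : 0 ≤ c)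
    (v : ι → ℝ) (i : ι) : ∃ k, c * |v i| ≤ |(M *ᵥ v) k| := by
  obtain ⟨k, -, hk⟩ := Finset.exists_max_image Finset.univ (fun j ↦ |v j|) ⟨i, Finset.mem_univ i⟩
  refine ⟨k, ?_⟩
  calc c * |v i| ≤ c * |v k| := mul_le_mul_of_nonneg_left (hk i (Finset.mem_univ i)) hc
    _ ≤ (|M k k| - ∑ j ∈ Finset.univ.erase k, |M k j|) * |v k| :=
      mul_le_mul_of_nonneg_right (hdom k) (abs_nonneg _)
    _ ≤ |(M *ᵥ v) k| :=
      sub_sum_erase_mul_abs_le_abs_mulVec_apply M v fun j ↦ hk j (Finset.mem_univ j)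

lemma sum_abs_inv_apply_le (hdom : ∀ k, c ≤ |M k k| - ∑ j ∈ Finset.univ.erase k, |M k j|)
    (hc : 0 < c) (hM : IsUnit M.det) (i : ι) : ∑ j, |M⁻¹ i j| ≤ 1 / c := by
  set x : ι → ℝ := fun j ↦ SignType.sign (M⁻¹ i j)
  have hrow : (M⁻¹ *ᵥ x) i = ∑ j, |M⁻¹ i j| :=
    Finset.sum_congr rfl fun j _ ↦ self_mul_sign _
  have hMx : M *ᵥ (M⁻¹ *ᵥ x) = x := by rw [mulVec_mulVec, mul_nonsing_inv M hM, one_mulVec]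
  obtain ⟨k, hk⟩ := exists_mul_abs_le_abs_mulVec_apply hdom hc.le (M⁻¹ *ᵥ x) i
  rw [hMx, hrow, abs_of_nonneg (Finset.sum_nonneg fun j _ ↦ abs_nonneg _)] at hk
  rw [le_div_iff₀ hc, mul_comm]
  exact hk.trans (abs_sign_le_one _)

lemma trace_inv_mul_transpose_le (hdom : ∀ k, c ≤ |M k k| - ∑ j ∈ Finset.univ.erase k, |M k j|)
    (hc : 0 < c) (hM : IsUnit M.det) :
    trace ((M * Mᵀ)⁻¹) ≤ Fintype.card ι / c ^ 2 := by
  rw [mul_inv_rev, ← transpose_nonsing_inv, trace_transpose_mul_self]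
  calc ∑ i, ∑ j, M⁻¹ i j ^ 2 ≤ ∑ i, (∑ j, |M⁻¹ i j|) ^ 2 := by
        refine Finset.sum_le_sum fun i _ ↦ ?_
        simpa only [sq_abs] using
          Finset.sum_sq_le_sq_sum_of_nonneg (s := Finset.univ) fun j _ ↦ abs_nonneg (M⁻¹ i j)
    _ ≤ ∑ _i : ι, (1 / c) ^ 2 := by
        gcongr with i
        exact sum_abs_inv_apply_le hdom hc hM i
    _ = Fintype.card ι / c ^ 2 := by simp [div_eq_mul_inv]

end Matrix

lemma Fin.sum_univ_erase_le_mul {d : ℕ} (f : Fin d → ℝ) (k : Fin d) {b : ℝ}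
    (hf : ∀ j, j ≠ k → f j ≤ b) : ∑ j ∈ Finset.univ.erase k, f j ≤ ((d : ℝ) - 1) * b := by
  have hcard : ((Finset.univ.erase k).card : ℝ) = (d : ℝ) - 1 := by
    rw [Finset.card_erase_of_mem (Finset.mem_univ k), Finset.card_univ, Fintype.card_fin,
      Nat.cast_pred (Fin.pos k)]
  rw [← hcard, ← nsmul_eq_mul]
  exact Finset.sum_le_card_nsmul _ _ _ fun j hj ↦ hf j (Finset.ne_of_mem_erase hj)

theorem stmt14_general (d : ℕ) (M : Matrix (Fin d) (Fin d) ℝ) (a b : ℝ)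
    (hab : ((d : ℝ) - 1) * b < a)
    (hdiag : ∀ i, a ≤ |M i i|)
    (hoff : ∀ i j, i ≠ j → |M i j| ≤ b) :
    IsUnit M ∧
      Matrix.trace ((M * Mᵀ)⁻¹) ≤ (d : ℝ) / (a - ((d : ℝ) - 1) * b) ^ 2 := by
  have hdom : ∀ k, a - ((d : ℝ) - 1) * b ≤ |M k k| - ∑ j ∈ Finset.univ.erase k, |M k j| :=
    fun k ↦ sub_le_sub (hdiag k) (Fin.sum_univ_erase_le_mul _ k fun j hj ↦ hoff k j hj.symm)
  have hc : 0 < a - ((d : ℝ) - 1) * b := sub_pos.mpr hab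
  have hdet : IsUnit M.det := (det_ne_zero_of_sum_row_lt_diag fun k ↦ by
    simp only [Real.norm_eq_abs]; linarith [hdom k]).isUnit
  refine ⟨(isUnit_iff_isUnit_det M).mpr hdet, ?_⟩
  simpa only [Fintype.card_fin] using trace_inv_mul_transpose_le hdom hc hdet

/-- if `|Mᵢᵢ| ≥ a` for all `i`, `|Mᵢⱼ| ≤ b` for all `i ≠ j`, and
`a > (d-1)b` with `a > 0`, `b ≥ 0`, then `M` is invertible and
`tr((M Mᵀ)⁻¹) ≤ d / (a - (d-1)b)²`. -/
theorem stmt14 (d : ℕ) (M : Matrix (Fin d) (Fin d) ℝ) (a b : ℝ)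
    (ha : 0 < a) (hb : 0 ≤ b) (hab : ((d : ℝ) - 1) * b < a)
    (hdiag : ∀ i, a ≤ |M i i|)
    (hoff : ∀ i j, i ≠ j → |M i j| ≤ b) :
    IsUnit M ∧
      Matrix.trace ((M * Mᵀ)⁻¹) ≤ (d : ℝ) / (a - ((d : ℝ) - 1) * b) ^ 2 :=
  stmt14_general d M a b hab hdiag hoff
end
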